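/- Let (θ_A^♯, θ_B^♯, θ_S^♯) and (θ_A^♭, θ_B^♭, θ_S^♭) be two classical decaying solutions of the three-phase heat system on (0,T) with the same constants κ_A, κ_B, κ_S, α_S > 0. Assume in addition that each solution is continuous on {x₃ ≥ 0} × [0,T), {x₃ ≤ 0} × [0,T), ℝ² × [0,T) respectively, that the decay bounds hold with a function M continuous on [0,T), and that the two solutions agree at t = 0: θ_A^♯(x,0) = θ_A^♭(x,0) for all x with x₃ ≥ 0, θ_B^♯(x,0) = θ_B^♭(x,0) for all x with x₃ ≤ 0, and θ_S^♯(x_h,0) = θ_S^♭(x_h,0) for all x_h ∈ ℝ². Then θ_A^♯ = θ_A^♭ on {x₃ ≥ 0} × [0,T), θ_B^♯ = θ_B^♭ on {x₃ ≤ 0} × [0,T), and θ_S^♯ = θ_S^♭ on ℝ² × [0,T). -/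

import Mathlib

open MeasureTheory Set

noncomputable section

/- We realize `ℝ³` as `(ℝ × ℝ) × ℝ`, writing a point `x` as `(x_h, x₃)` with
horizontal part `x_h = x.1 ∈ ℝ × ℝ` and vertical coordinate `x₃ = x.2`. -/

/-- The standard basis directions of `ℝ³ = (ℝ × ℝ) × ℝ`. -/
def e1 : (ℝ × ℝ) × ℝ := ((1, 0), 0)
def e2 : (ℝ × ℝ) × ℝ := ((0, 1), 0)
def e3 : (ℝ × ℝ) × ℝ := ((0, 0), 1)

/-- Open upper half space `ℝ³₊ = {x : x₃ > 0}`. -/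
def upperHalf : Set ((ℝ × ℝ) × ℝ) := {x | 0 < x.2}
/-- Open lower half space `ℝ³₋ = {x : x₃ < 0}`. -/
def lowerHalf : Set ((ℝ × ℝ) × ℝ) := {x | x.2 < 0}
/-- Closed upper half space `{x : x₃ ≥ 0}`. -/
def UA : Set ((ℝ × ℝ) × ℝ) := {x | 0 ≤ x.2}
/-- Closed lower half space `{x : x₃ ≤ 0}`. -/
def UB : Set ((ℝ × ℝ) × ℝ) := {x | x.2 ≤ 0}

/-- Partial derivative within a set `s` (one-sided up to the boundary), in direction `v`. -/
noncomputable def pdW (s : Set ((ℝ × ℝ) × ℝ)) (v : (ℝ × ℝ) × ℝ)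
    (f : (ℝ × ℝ) × ℝ → ℝ) (x : (ℝ × ℝ) × ℝ) : ℝ :=
  fderivWithin ℝ f s x v

/-- Laplacian `Δf` computed with derivatives within `s`. -/
noncomputable def lapW (s : Set ((ℝ × ℝ) × ℝ)) (f : (ℝ × ℝ) × ℝ → ℝ)
    (x : (ℝ × ℝ) × ℝ) : ℝ :=
  pdW s e1 (pdW s e1 f) x + pdW s e2 (pdW s e2 f) x + pdW s e3 (pdW s e3 f) x

/-- `|∇f|²` computed with derivatives within `s`. -/
noncomputable def gradSqW (s : Set ((ℝ × ℝ) × ℝ)) (f : (ℝ × ℝ) × ℝ → ℝ)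
    (x : (ℝ × ℝ) × ℝ) : ℝ :=
  (pdW s e1 f x) ^ 2 + (pdW s e2 f x) ^ 2 + (pdW s e3 f x) ^ 2

/-- Horizontal partial derivative on `ℝ²` in direction `v`. -/
noncomputable def pdH (v : ℝ × ℝ) (f : ℝ × ℝ → ℝ) (x : ℝ × ℝ) : ℝ := fderiv ℝ f x v

/-- Horizontal Laplacian `Δ_h f = ∂₁²f + ∂₂²f` on `ℝ²`. -/
noncomputable def lapH (f : ℝ × ℝ → ℝ) (x : ℝ × ℝ) : ℝ :=
  pdH (1, 0) (pdH (1, 0) f) x + pdH (0, 1) (pdH (0, 1) f) x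

/-- `|∇_h f|²` on `ℝ²`. -/
noncomputable def gradSqH (f : ℝ × ℝ → ℝ) (x : ℝ × ℝ) : ℝ :=
  (pdH (1, 0) f x) ^ 2 + (pdH (0, 1) f x) ^ 2

/-- A classical decaying solution of the three-phase heat system on `(0,T)` with constants
`κ_A, κ_B, κ_S, α_S`: regularity up to the interface, the three heat equations, the interface
conditions, and the polynomial decay bounds with a continuous function `M` on `(0,T)`. -/
structure ClassicalDecayingSolution (T κA κB κS αS : ℝ)
    (θA θB : (ℝ × ℝ) × ℝ → ℝ → ℝ) (θS : ℝ × ℝ → ℝ → ℝ) : Prop where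
  contA : ContinuousOn (fun p : ((ℝ × ℝ) × ℝ) × ℝ => θA p.1 p.2) (UA ×ˢ Ioo 0 T)
  contB : ContinuousOn (fun p : ((ℝ × ℝ) × ℝ) × ℝ => θB p.1 p.2) (UB ×ˢ Ioo 0 T)
  contS : ContinuousOn (fun p : (ℝ × ℝ) × ℝ => θS p.1 p.2) (univ ×ˢ Ioo 0 T)
  spaceA : ∀ t ∈ Ioo (0 : ℝ) T, ContDiffOn ℝ 2 (fun x => θA x t) UA
  spaceB : ∀ t ∈ Ioo (0 : ℝ) T, ContDiffOn ℝ 2 (fun x => θB x t) UB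
  spaceS : ∀ t ∈ Ioo (0 : ℝ) T, ContDiff ℝ 2 (fun xh => θS xh t)
  timeA : ∀ x ∈ UA, ∀ t ∈ Ioo (0 : ℝ) T, DifferentiableAt ℝ (θA x) t
  timeB : ∀ x ∈ UB, ∀ t ∈ Ioo (0 : ℝ) T, DifferentiableAt ℝ (θB x) t
  timeS : ∀ xh : ℝ × ℝ, ∀ t ∈ Ioo (0 : ℝ) T, DifferentiableAt ℝ (θS xh) t
  timeDerivContA : ContinuousOn (fun p : ((ℝ × ℝ) × ℝ) × ℝ => deriv (θA p.1) p.2)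
    (UA ×ˢ Ioo 0 T)
  timeDerivContB : ContinuousOn (fun p : ((ℝ × ℝ) × ℝ) × ℝ => deriv (θB p.1) p.2)
    (UB ×ˢ Ioo 0 T)
  timeDerivContS : ContinuousOn (fun p : (ℝ × ℝ) × ℝ => deriv (θS p.1) p.2)
    (univ ×ˢ Ioo 0 T)
  pdeA : ∀ x : (ℝ × ℝ) × ℝ, 0 < x.2 → ∀ t ∈ Ioo (0 : ℝ) T,
    deriv (θA x) t = κA * lapW UA (fun y => θA y t) x
  pdeB : ∀ x : (ℝ × ℝ) × ℝ, x.2 < 0 → ∀ t ∈ Ioo (0 : ℝ) T,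
    deriv (θB x) t = κB * lapW UB (fun y => θB y t) x
  pdeS : ∀ xh : ℝ × ℝ, ∀ t ∈ Ioo (0 : ℝ) T,
    αS * deriv (θS xh) t = κS * lapH (fun y => θS y t) xh
      + κA * pdW UA e3 (fun y => θA y t) (xh, 0)
      - κB * pdW UB e3 (fun y => θB y t) (xh, 0)
  interfaceA : ∀ xh : ℝ × ℝ, ∀ t ∈ Ioo (0 : ℝ) T, θA (xh, 0) t = θS xh t
  interfaceB : ∀ xh : ℝ × ℝ, ∀ t ∈ Ioo (0 : ℝ) T, θB (xh, 0) t = θS xh t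
  decay : ∃ M : ℝ → ℝ, ContinuousOn M (Ioo 0 T) ∧
    (∀ x ∈ UA, ∀ t ∈ Ioo (0 : ℝ) T,
      |θA x t| + |deriv (θA x) t| + ‖fderivWithin ℝ (fun y => θA y t) UA x‖
        + ‖fderivWithin ℝ (fderivWithin ℝ (fun y => θA y t) UA) UA x‖
        ≤ M t / (1 + ‖x‖) ^ 4) ∧
    (∀ x ∈ UB, ∀ t ∈ Ioo (0 : ℝ) T,
      |θB x t| + |deriv (θB x) t| + ‖fderivWithin ℝ (fun y => θB y t) UB x‖
        + ‖fderivWithin ℝ (fderivWithin ℝ (fun y => θB y t) UB) UB x‖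
        ≤ M t / (1 + ‖x‖) ^ 4) ∧
    (∀ xh : ℝ × ℝ, ∀ t ∈ Ioo (0 : ℝ) T,
      |θS xh t| + |deriv (θS xh) t| + ‖fderiv ℝ (fun y => θS y t) xh‖
        + ‖fderiv ℝ (fderiv ℝ (fun y => θS y t)) xh‖ ≤ M t / (1 + ‖xh‖) ^ 4)

/-- The total heat energy
`E(t) = ∫_{ℝ³₊} θ_A² dx + ∫_{ℝ³₋} θ_B² dx + α_S ∫_{ℝ²} θ_S² dx_h`. -/
noncomputable def energy (αS : ℝ) (θA θB : (ℝ × ℝ) × ℝ → ℝ → ℝ) (θS : ℝ × ℝ → ℝ → ℝ)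
    (t : ℝ) : ℝ :=
  (∫ x in upperHalf, (θA x t) ^ 2) + (∫ x in lowerHalf, (θB x t) ^ 2)
    + αS * ∫ xh : ℝ × ℝ, (θS xh t) ^ 2

/-
Uniqueness follows from a weak maximum principle for the difference `W` of the two solutions,
glued across the interface into one function on `ℝ³ × [0,T)`. If `W` were positive somewhere,
the maximum of `W - εt` over a large ball times `[0, t₁]` would be attained at a point
`(x₀, t₀)` with `t₀ > 0`, where `W(·, t₀)` has a global maximum in space (the decay of the
solutions keeps `W` small outside the ball) and `∂ₜW(x₀, t₀) ≥ ε > 0`. The equations rule this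
out: in either bulk phase `∂ₜW = κ ΔW ≤ 0` at a spatial maximum, and on the interface
`α_S ∂ₜW = κ_S Δ_h W + κ_A ∂₃W_A - κ_B ∂₃W_B ≤ 0`, because a maximum over the closed upper
(lower) half space has nonpositive upward (nonnegative downward) one-sided normal derivative.
Applying this to both orders of the two solutions gives equality.
-/

open Filter Topology

local notation "ℝ³" => (ℝ × ℝ) × ℝ

section Calculus

variable {E : Type*} [NormedAddCommGroup E] [NormedSpace ℝ E]

theorem IsLocalMax.deriv_deriv_nonpos {φ : ℝ → ℝ} {a : ℝ} (h : IsLocalMax φ a)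
    (hc : ContinuousAt φ a) : deriv (deriv φ) a ≤ 0 := by
  by_contra! hpos
  -- the second derivative test would make `a` a local minimum too, so `φ` is locally constant
  have hmin := isLocalMin_of_deriv_deriv_pos hpos h.deriv_eq_zero hc
  have hconst : φ =ᶠ[𝓝 a] fun _ => φ a := (h.and hmin).mono fun x hx => le_antisymm hx.1 hx.2
  have h0 : deriv (deriv φ) a = 0 := by
    rw [hconst.deriv.deriv_eq]
    simp
  exact hpos.ne' h0

theorem IsLocalMax.fderiv_fderiv_apply_nonpos {f : E → ℝ} {x : E} (hf : ContDiffAt ℝ 2 f x)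
    (h : IsLocalMax f x) (v : E) : fderiv ℝ (fun y => fderiv ℝ f y v) x v ≤ 0 := by
  set line : ℝ → E := fun r => x + r • v
  have hline : ∀ r, HasDerivAt line v r := fun r => by
    simpa only [id, one_smul] using ((hasDerivAt_id r).smul_const v).const_add x
  have hline0 : line 0 = x := by simp [line]
  have hdiff : ∀ᶠ y in 𝓝 (line 0), DifferentiableAt ℝ f y :=
    hline0 ▸ (hf.eventually (by simp)).mono fun y hy => hy.differentiableAt two_ne_zero
  have hderiv : deriv (f ∘ line) =ᶠ[𝓝 0] fun r => fderiv ℝ f (line r) v := by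
    filter_upwards [(hline 0).continuousAt.eventually hdiff] with r hr
    exact (hr.hasFDerivAt.comp_hasDerivAt r (hline r)).deriv
  have hsecond : HasDerivAt (fun r => fderiv ℝ f (line r) v)
      (fderiv ℝ (fun y => fderiv ℝ f y v) (line 0) v) 0 := by
    have hd : DifferentiableAt ℝ (fun y => fderiv ℝ f y v) (line 0) :=
      hline0 ▸ ((hf.fderiv_right le_rfl).differentiableAt one_ne_zero).clm_apply
        (differentiableAt_const v)
    exact hd.hasFDerivAt.comp_hasDerivAt 0 (hline 0)
  have hmax : IsLocalMax (f ∘ line) 0 :=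
    (hline0 ▸ h : IsLocalMax f (line 0)).comp_continuous (hline 0).continuousAt
  rw [← hline0, ← hsecond.deriv, ← hderiv.deriv_eq]
  exact hmax.deriv_deriv_nonpos
    ((hline0 ▸ hf.continuousAt : ContinuousAt f (line 0)).comp (hline 0).continuousAt)

theorem fderivWithin_fderivWithin_apply_sub {s : Set E} (hs : UniqueDiffOn ℝ s) {x : E}
    (hx : x ∈ s) {f g : E → ℝ} (hf : ContDiffOn ℝ 2 f s) (hg : ContDiffOn ℝ 2 g s) (v w : E) :
    fderivWithin ℝ (fun y => fderivWithin ℝ (fun z => f z - g z) s y v) s x w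
      = fderivWithin ℝ (fun y => fderivWithin ℝ f s y v) s x w
        - fderivWithin ℝ (fun y => fderivWithin ℝ g s y v) s x w := by
  have hfirst : ∀ y ∈ s, fderivWithin ℝ (fun z => f z - g z) s y v
      = fderivWithin ℝ f s y v - fderivWithin ℝ g s y v := fun y hy => by
    rw [fderivWithin_fun_sub (hs y hy) (hf.differentiableOn two_ne_zero y hy)
      (hg.differentiableOn two_ne_zero y hy)]
    rfl
  have hf' : DifferentiableWithinAt ℝ (fun y => fderivWithin ℝ f s y v) s x :=
    ((hf.fderivWithin hs le_rfl).differentiableOn one_ne_zero x hx).clm_apply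
      (differentiableWithinAt_const v)
  have hg' : DifferentiableWithinAt ℝ (fun y => fderivWithin ℝ g s y v) s x :=
    ((hg.fderivWithin hs le_rfl).differentiableOn one_ne_zero x hx).clm_apply
      (differentiableWithinAt_const v)
  rw [fderivWithin_congr hfirst (hfirst x hx), fderivWithin_fun_sub (hs x hx) hf' hg']
  rfl

theorem HasDerivAt.nonneg_of_isMaxOn_Icc {f : ℝ → ℝ} {a b d : ℝ} (hab : a < b)
    (hmax : IsMaxOn f (Icc a b) b) (hf : HasDerivAt f d b) : 0 ≤ d := by
  have hcone : a - b ∈ posTangentConeAt (Icc a b) b :=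
    mem_posTangentConeAt_of_segment_subset <| by
      rw [add_sub_cancel, segment_symm, segment_eq_Icc hab.le]
  have := hmax.localize.hasFDerivWithinAt_nonpos hf.hasDerivWithinAt.hasFDerivWithinAt hcone
  simp only [ContinuousLinearMap.toSpanSingleton_apply, smul_eq_mul] at this
  nlinarith

end Calculus

section HalfSpaces

theorem convex_UA : Convex ℝ UA :=
  convex_halfSpace_ge (LinearMap.snd ℝ (ℝ × ℝ) ℝ).isLinear 0

theorem convex_UB : Convex ℝ UB :=
  convex_halfSpace_le (LinearMap.snd ℝ (ℝ × ℝ) ℝ).isLinear 0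

theorem UA_mem_nhds {x : ℝ³} (hx : 0 < x.2) : UA ∈ 𝓝 x :=
  continuous_snd.continuousAt.preimage_mem_nhds (Ici_mem_nhds hx)

theorem UB_mem_nhds {x : ℝ³} (hx : x.2 < 0) : UB ∈ 𝓝 x :=
  continuous_snd.continuousAt.preimage_mem_nhds (Iic_mem_nhds hx)

theorem uniqueDiffOn_UA : UniqueDiffOn ℝ UA :=
  uniqueDiffOn_convex convex_UA
    ⟨((0, 0), 1), mem_interior_iff_mem_nhds.2 (UA_mem_nhds one_pos)⟩

theorem uniqueDiffOn_UB : UniqueDiffOn ℝ UB :=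
  uniqueDiffOn_convex convex_UB
    ⟨((0, 0), -1), mem_interior_iff_mem_nhds.2 (UB_mem_nhds neg_one_lt_zero)⟩

end HalfSpaces

section Operators

variable {s : Set ℝ³} {f g : ℝ³ → ℝ} {x : ℝ³}

theorem pdW_sub (hs : UniqueDiffWithinAt ℝ s x) (hf : DifferentiableWithinAt ℝ f s x)
    (hg : DifferentiableWithinAt ℝ g s x) (v : ℝ³) :
    pdW s v (fun y => f y - g y) x = pdW s v f x - pdW s v g x := by
  rw [pdW, fderivWithin_fun_sub hs hf hg]
  rfl

theorem lapW_sub (hs : UniqueDiffOn ℝ s) (hx : x ∈ s) (hf : ContDiffOn ℝ 2 f s)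
    (hg : ContDiffOn ℝ 2 g s) :
    lapW s (fun y => f y - g y) x = lapW s f x - lapW s g x := by
  have key : ∀ v, pdW s v (pdW s v fun y => f y - g y) x
      = pdW s v (pdW s v f) x - pdW s v (pdW s v g) x :=
    fun v => fderivWithin_fderivWithin_apply_sub hs hx hf hg v v
  rw [lapW, lapW, lapW, key, key, key]
  ring

theorem lapH_sub {f g : ℝ × ℝ → ℝ} {x : ℝ × ℝ} (hf : ContDiff ℝ 2 f) (hg : ContDiff ℝ 2 g) :
    lapH (fun y => f y - g y) x = lapH f x - lapH g x := by
  have key : ∀ v, pdH v (pdH v fun y => f y - g y) x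
      = pdH v (pdH v f) x - pdH v (pdH v g) x := fun v => by
    have := fderivWithin_fderivWithin_apply_sub uniqueDiffOn_univ (mem_univ x)
      hf.contDiffOn hg.contDiffOn v v
    simp only [fderivWithin_univ] at this
    exact this
  rw [lapH, lapH, lapH, key, key]
  ring

theorem pdW_pdW_of_mem_nhds (hs : s ∈ 𝓝 x) (v : ℝ³) :
    pdW s v (pdW s v f) x = fderiv ℝ (fun y => fderiv ℝ f y v) x v := by
  have hev : pdW s v f =ᶠ[𝓝 x] fun y => fderiv ℝ f y v := by
    filter_upwards [eventually_eventually_nhds.2 hs] with y hy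
    rw [pdW, fderivWithin_of_mem_nhds (show s ∈ 𝓝 y from hy)]
  rw [pdW, fderivWithin_of_mem_nhds hs, hev.fderiv_eq]

theorem lapW_nonpos_of_isLocalMax (hs : s ∈ 𝓝 x) (hf : ContDiffOn ℝ 2 f s)
    (h : IsLocalMax f x) : lapW s f x ≤ 0 := by
  have hf' := hf.contDiffAt hs
  rw [lapW, pdW_pdW_of_mem_nhds hs, pdW_pdW_of_mem_nhds hs, pdW_pdW_of_mem_nhds hs]
  linarith [h.fderiv_fderiv_apply_nonpos hf' e1, h.fderiv_fderiv_apply_nonpos hf' e2,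
    h.fderiv_fderiv_apply_nonpos hf' e3]

theorem lapH_nonpos_of_isLocalMax {f : ℝ × ℝ → ℝ} {x : ℝ × ℝ} (hf : ContDiff ℝ 2 f)
    (h : IsLocalMax f x) : lapH f x ≤ 0 :=
  add_nonpos (h.fderiv_fderiv_apply_nonpos hf.contDiffAt _)
    (h.fderiv_fderiv_apply_nonpos hf.contDiffAt _)

theorem pdW_UA_e3_nonpos_of_isMaxOn (hx : x ∈ UA) (h : IsMaxOn f UA x) : pdW UA e3 f x ≤ 0 := by
  have hx' : x + e3 ∈ UA := show (0 : ℝ) ≤ x.2 + 1 by linarith [show (0 : ℝ) ≤ x.2 from hx]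
  exact h.localize.fderivWithin_nonpos
    (mem_posTangentConeAt_of_segment_subset (convex_UA.segment_subset hx hx'))

theorem pdW_UB_e3_nonneg_of_isMaxOn (hx : x ∈ UB) (h : IsMaxOn f UB x) : 0 ≤ pdW UB e3 f x := by
  have hx' : x + -e3 ∈ UB := show x.2 + -1 ≤ (0 : ℝ) by linarith [show x.2 ≤ (0 : ℝ) from hx]
  have := h.localize.fderivWithin_nonpos
    (mem_posTangentConeAt_of_segment_subset (convex_UB.segment_subset hx hx'))
  rw [map_neg] at this
  exact neg_nonpos.1 this

end Operators

section MaximumPrinciple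

variable {E : Type*} [NormedAddCommGroup E] {T : ℝ} {s s' : Set E} {u v : E → ℝ → ℝ}

def DecaysUniformlyOn (T : ℝ) (s : Set E) (u : E → ℝ → ℝ) : Prop :=
  ∀ τ < T, ∀ c > 0, ∃ R, ∀ x ∈ s, R < ‖x‖ → ∀ t ∈ Ioc 0 τ, |u x t| ≤ c

theorem decaysUniformlyOn_of_abs_le {M : ℝ → ℝ} {n : ℕ} (hM : ContinuousOn M (Ico 0 T))
    (hn : n ≠ 0) (hu : ∀ x ∈ s, ∀ t ∈ Ioo 0 T, |u x t| ≤ M t / (1 + ‖x‖) ^ n) :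
    DecaysUniformlyOn T s u := by
  intro τ hτ c hc
  obtain ⟨C, hC⟩ :=
    isCompact_Icc.exists_bound_of_continuousOn (hM.mono (Icc_subset_Ico_right hτ))
  refine ⟨C / c, fun x hx hR t ht => (hu x hx t ⟨ht.1, ht.2.trans_lt hτ⟩).trans ?_⟩
  have hpow : 1 + ‖x‖ ≤ (1 + ‖x‖) ^ n := le_self_pow₀ (by linarith [norm_nonneg x]) hn
  rw [div_le_iff₀ (by positivity)]
  calc M t ≤ C := (le_abs_self _).trans (hC t (Ioc_subset_Icc_self ht))
    _ ≤ ‖x‖ * c := ((div_lt_iff₀ hc).1 hR).le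
    _ ≤ c * (1 + ‖x‖) ^ n := by nlinarith

theorem DecaysUniformlyOn.sub (hu : DecaysUniformlyOn T s u) (hv : DecaysUniformlyOn T s v) :
    DecaysUniformlyOn T s fun x t => u x t - v x t := by
  intro τ hτ c hc
  obtain ⟨R₁, h₁⟩ := hu τ hτ (c / 2) (half_pos hc)
  obtain ⟨R₂, h₂⟩ := hv τ hτ (c / 2) (half_pos hc)
  refine ⟨max R₁ R₂, fun x hx hR t ht => ?_⟩
  rw [max_lt_iff] at hR
  calc |u x t - v x t| ≤ |u x t| + |v x t| := abs_sub _ _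
    _ ≤ c / 2 + c / 2 := add_le_add (h₁ x hx hR.1 t ht) (h₂ x hx hR.2 t ht)
    _ = c := add_halves c

theorem DecaysUniformlyOn.union (hs : DecaysUniformlyOn T s u) (hs' : DecaysUniformlyOn T s' u) :
    DecaysUniformlyOn T (s ∪ s') u := by
  intro τ hτ c hc
  obtain ⟨R₁, h₁⟩ := hs τ hτ c hc
  obtain ⟨R₂, h₂⟩ := hs' τ hτ c hc
  refine ⟨max R₁ R₂, fun x hx hR => ?_⟩
  rw [max_lt_iff] at hR
  exact hx.elim (fun hx => h₁ x hx hR.1) (fun hx => h₂ x hx hR.2)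

theorem DecaysUniformlyOn.congr (hu : DecaysUniformlyOn T s u)
    (huv : ∀ x ∈ s, ∀ t ∈ Ioo 0 T, u x t = v x t) : DecaysUniformlyOn T s v := by
  intro τ hτ c hc
  obtain ⟨R, hR⟩ := hu τ hτ c hc
  exact ⟨R, fun x hx hx' t ht => huv x hx t ⟨ht.1, ht.2.trans_lt hτ⟩ ▸ hR x hx hx' t ht⟩

theorem nonpos_of_deriv_nonpos_at_spatial_max [ProperSpace E] {W : E → ℝ → ℝ}
    (hcont : ContinuousOn (fun p : E × ℝ => W p.1 p.2) (univ ×ˢ Ico 0 T))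
    (hinit : ∀ x, W x 0 ≤ 0) (hdecay : DecaysUniformlyOn T univ W)
    (hmax : ∀ x₀, ∀ t₀ ∈ Ioo 0 T, (∀ y, W y t₀ ≤ W x₀ t₀) → ∃ d ≤ 0, HasDerivAt (W x₀) d t₀)
    {x₁ : E} {t₁ : ℝ} (ht₁ : t₁ ∈ Ico 0 T) : W x₁ t₁ ≤ 0 := by
  by_contra! hpos
  obtain rfl | ht₁0 := ht₁.1.eq_or_lt
  · exact (hinit x₁).not_gt hpos
  set c := W x₁ t₁ / 2 with hc_def
  set ε := c / t₁
  have hc : 0 < c := half_pos hpos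
  have hε : 0 < ε := div_pos hc ht₁0
  have hεt₁ : ε * t₁ = c := div_mul_cancel₀ _ ht₁0.ne'
  obtain ⟨R, hR⟩ := hdecay t₁ ht₁.2 (c / 2) (half_pos hc)
  have hfar : ∀ y, ∀ t ∈ Ioc 0 t₁, R < ‖y‖ → W y t < c := fun y t ht hy =>
    (le_abs_self _).trans_lt ((hR y trivial hy t ht).trans_lt (half_lt_self hc))
  have hx₁ : x₁ ∈ Metric.closedBall 0 R := mem_closedBall_zero_iff.2 <| not_lt.1 fun h =>
    (hfar x₁ t₁ ⟨ht₁0, le_rfl⟩ h).not_ge (half_le_self hpos.le)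
  set K := Metric.closedBall (0 : E) R ×ˢ Icc 0 t₁
  have hGcont : ContinuousOn (fun p : E × ℝ => W p.1 p.2 - ε * p.2) K :=
    (hcont.sub (continuous_snd.const_mul ε).continuousOn).mono
      (prod_mono (subset_univ _) (Icc_subset_Ico_right ht₁.2))
  obtain ⟨⟨x₀, t₀⟩, ⟨hx₀, ht₀⟩, hmaxK⟩ := ((isCompact_closedBall (0 : E) R).prod
    isCompact_Icc).exists_isMaxOn ⟨(x₁, t₁), hx₁, ht₁0.le, le_rfl⟩ hGcont
  have hG : c ≤ W x₀ t₀ - ε * t₀ := by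
    have : W x₁ t₁ - ε * t₁ ≤ W x₀ t₀ - ε * t₀ :=
      hmaxK (show (x₁, t₁) ∈ K from ⟨hx₁, ht₁0.le, le_rfl⟩)
    linarith
  have ht₀0 : 0 < t₀ := ht₀.1.lt_of_ne fun h => by
    subst h
    linarith [hinit x₀]
  have hspace : ∀ y, W y t₀ ≤ W x₀ t₀ := fun y => by
    rcases le_or_gt ‖y‖ R with hy | hy
    · have : W y t₀ - ε * t₀ ≤ W x₀ t₀ - ε * t₀ :=
        hmaxK (show (y, t₀) ∈ K from ⟨mem_closedBall_zero_iff.2 hy, ht₀⟩)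
      linarith
    · linarith [hfar y t₀ ⟨ht₀0, ht₀.2⟩ hy, mul_nonneg hε.le ht₀0.le]
  obtain ⟨d, hd, hderiv⟩ := hmax x₀ t₀ ⟨ht₀0, ht₀.2.trans_lt ht₁.2⟩ hspace
  have htime : IsMaxOn (fun s => W x₀ s - ε * s) (Icc 0 t₀) t₀ := fun s hs =>
    hmaxK (show (x₀, s) ∈ K from ⟨hx₀, hs.1, hs.2.trans ht₀.2⟩)
  have := (hderiv.sub ((hasDerivAt_id t₀).const_mul ε)).nonneg_of_isMaxOn_Icc ht₀0 htime
  linarith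

end MaximumPrinciple

theorem heat_deriv_sub_nonpos_of_isLocalMax {s : Set ℝ³} (hs : UniqueDiffOn ℝ s) {x : ℝ³}
    (hxs : s ∈ 𝓝 x) {κ : ℝ} (hκ : 0 ≤ κ) {u₁ u₂ : ℝ³ → ℝ → ℝ} {t : ℝ}
    (hu₁ : ContDiffOn ℝ 2 (fun y => u₁ y t) s) (hu₂ : ContDiffOn ℝ 2 (fun y => u₂ y t) s)
    (hpde₁ : deriv (u₁ x) t = κ * lapW s (fun y => u₁ y t) x)
    (hpde₂ : deriv (u₂ x) t = κ * lapW s (fun y => u₂ y t) x)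
    (hmax : IsLocalMax (fun y => u₁ y t - u₂ y t) x) :
    deriv (u₁ x) t - deriv (u₂ x) t ≤ 0 := by
  have hlap := lapW_nonpos_of_isLocalMax hxs (hu₁.sub hu₂) hmax
  rw [lapW_sub hs (mem_of_mem_nhds hxs) hu₁ hu₂] at hlap
  rw [hpde₁, hpde₂, ← mul_sub]
  exact mul_nonpos_of_nonneg_of_nonpos hκ hlap

section TwoSolutions

variable {T κA κB κS αS : ℝ} {θA₁ θB₁ θA₂ θB₂ : ℝ³ → ℝ → ℝ} {θS₁ θS₂ : ℝ × ℝ → ℝ → ℝ}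

theorem interface_deriv_sub_nonpos (hκA : 0 ≤ κA) (hκB : 0 ≤ κB) (hκS : 0 ≤ κS) (hαS : 0 < αS)
    (hsol₁ : ClassicalDecayingSolution T κA κB κS αS θA₁ θB₁ θS₁)
    (hsol₂ : ClassicalDecayingSolution T κA κB κS αS θA₂ θB₂ θS₂)
    {xh : ℝ × ℝ} {t : ℝ} (ht : t ∈ Ioo 0 T)
    (hA : IsMaxOn (fun y => θA₁ y t - θA₂ y t) UA (xh, 0))
    (hB : IsMaxOn (fun y => θB₁ y t - θB₂ y t) UB (xh, 0))
    (hS : IsLocalMax (fun y => θS₁ y t - θS₂ y t) xh) :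
    deriv (θS₁ xh) t - deriv (θS₂ xh) t ≤ 0 := by
  have hxA : ((xh, 0) : ℝ³) ∈ UA := le_refl (0 : ℝ)
  have hxB : ((xh, 0) : ℝ³) ∈ UB := le_refl (0 : ℝ)
  have hlap := lapH_nonpos_of_isLocalMax ((hsol₁.spaceS t ht).sub (hsol₂.spaceS t ht)) hS
  rw [lapH_sub (hsol₁.spaceS t ht) (hsol₂.spaceS t ht)] at hlap
  have hfluxA := pdW_UA_e3_nonpos_of_isMaxOn hxA hA
  rw [pdW_sub (uniqueDiffOn_UA _ hxA) ((hsol₁.spaceA t ht).differentiableOn two_ne_zero _ hxA)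
    ((hsol₂.spaceA t ht).differentiableOn two_ne_zero _ hxA)] at hfluxA
  have hfluxB := pdW_UB_e3_nonneg_of_isMaxOn hxB hB
  rw [pdW_sub (uniqueDiffOn_UB _ hxB) ((hsol₁.spaceB t ht).differentiableOn two_ne_zero _ hxB)
    ((hsol₂.spaceB t ht).differentiableOn two_ne_zero _ hxB)] at hfluxB
  refine nonpos_of_mul_nonpos_right ?_ hαS
  rw [mul_sub, hsol₁.pdeS xh t ht, hsol₂.pdeS xh t ht]
  nlinarith [mul_nonpos_of_nonneg_of_nonpos hκS hlap, mul_nonpos_of_nonneg_of_nonpos hκA hfluxA,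
    mul_nonneg hκB hfluxB]

theorem sub_eq_sub_of_interface
    (hsol₁ : ClassicalDecayingSolution T κA κB κS αS θA₁ θB₁ θS₁)
    (hsol₂ : ClassicalDecayingSolution T κA κB κS αS θA₂ θB₂ θS₂)
    {x : ℝ³} (hx : x.2 = 0) {t : ℝ} (ht : t ∈ Ioo 0 T) :
    θA₁ x t - θA₂ x t = θB₁ x t - θB₂ x t := by
  obtain ⟨xh, x₃⟩ := x
  subst hx
  rw [hsol₁.interfaceA xh t ht, hsol₂.interfaceA xh t ht, hsol₁.interfaceB xh t ht,
    hsol₂.interfaceB xh t ht]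

def gluedDiff (θA₁ θB₁ θA₂ θB₂ : ℝ³ → ℝ → ℝ) (x : ℝ³) (t : ℝ) : ℝ :=
  if 0 ≤ x.2 then θA₁ x t - θA₂ x t else θB₁ x t - θB₂ x t

theorem gluedDiff_of_mem_UA {x : ℝ³} (hx : x ∈ UA) (t : ℝ) :
    gluedDiff θA₁ θB₁ θA₂ θB₂ x t = θA₁ x t - θA₂ x t :=
  if_pos hx

theorem gluedDiff_of_neg {x : ℝ³} (hx : x.2 < 0) (t : ℝ) :
    gluedDiff θA₁ θB₁ θA₂ θB₂ x t = θB₁ x t - θB₂ x t :=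
  if_neg hx.not_ge

theorem gluedDiff_of_mem_UB
    (hsol₁ : ClassicalDecayingSolution T κA κB κS αS θA₁ θB₁ θS₁)
    (hsol₂ : ClassicalDecayingSolution T κA κB κS αS θA₂ θB₂ θS₂)
    {x : ℝ³} (hx : x ∈ UB) {t : ℝ} (ht : t ∈ Ioo 0 T) :
    gluedDiff θA₁ θB₁ θA₂ θB₂ x t = θB₁ x t - θB₂ x t := by
  rcases (show x.2 ≤ 0 from hx).lt_or_eq with hx | hx
  · exact gluedDiff_of_neg hx t
  · rw [gluedDiff_of_mem_UA hx.ge, sub_eq_sub_of_interface hsol₁ hsol₂ hx ht]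

theorem gluedDiff_zero (hinitA : ∀ x ∈ UA, θA₁ x 0 = θA₂ x 0)
    (hinitB : ∀ x ∈ UB, θB₁ x 0 = θB₂ x 0) (x : ℝ³) : gluedDiff θA₁ θB₁ θA₂ θB₂ x 0 = 0 := by
  rcases le_or_gt 0 x.2 with hx | hx
  · rw [gluedDiff_of_mem_UA hx, hinitA x hx, sub_self]
  · rw [gluedDiff_of_neg hx, hinitB x hx.le, sub_self]

theorem continuousOn_gluedDiff
    (hsol₁ : ClassicalDecayingSolution T κA κB κS αS θA₁ θB₁ θS₁)
    (hsol₂ : ClassicalDecayingSolution T κA κB κS αS θA₂ θB₂ θS₂)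
    (hcA₁ : ContinuousOn (fun p : ℝ³ × ℝ => θA₁ p.1 p.2) (UA ×ˢ Ico 0 T))
    (hcB₁ : ContinuousOn (fun p : ℝ³ × ℝ => θB₁ p.1 p.2) (UB ×ˢ Ico 0 T))
    (hcA₂ : ContinuousOn (fun p : ℝ³ × ℝ => θA₂ p.1 p.2) (UA ×ˢ Ico 0 T))
    (hcB₂ : ContinuousOn (fun p : ℝ³ × ℝ => θB₂ p.1 p.2) (UB ×ˢ Ico 0 T))
    (hinitA : ∀ x ∈ UA, θA₁ x 0 = θA₂ x 0) (hinitB : ∀ x ∈ UB, θB₁ x 0 = θB₂ x 0) :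
    ContinuousOn (fun p : ℝ³ × ℝ => gluedDiff θA₁ θB₁ θA₂ θB₂ p.1 p.2) (univ ×ˢ Ico 0 T) := by
  have hx₃ : Continuous fun p : ℝ³ × ℝ => p.1.2 := continuous_snd.comp continuous_fst
  refine ContinuousOn.if (p := fun p : ℝ³ × ℝ => 0 ≤ p.1.2) ?_ ?_ ?_
  · rintro ⟨x, t⟩ ⟨⟨-, ht⟩, hfr⟩
    have hx : x.2 = 0 := (frontier_le_subset_eq continuous_const hx₃ hfr).symm
    rcases ht.1.eq_or_lt with rfl | ht0
    · rw [hinitA x hx.ge, hinitB x hx.le, sub_self, sub_self]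
    · exact sub_eq_sub_of_interface hsol₁ hsol₂ hx ⟨ht0, ht.2⟩
  · rw [(isClosed_le continuous_const hx₃).closure_eq]
    exact (hcA₁.sub hcA₂).mono fun p hp => ⟨hp.2, hp.1.2⟩
  · have hcl : closure {p : ℝ³ × ℝ | ¬0 ≤ p.1.2} ⊆ {p | p.1.2 ≤ 0} :=
      closure_minimal (fun p hp => (not_le.1 hp).le) (isClosed_le hx₃ continuous_const)
    exact (hcB₁.sub hcB₂).mono fun p hp => ⟨hcl hp.2, hp.1.2⟩

theorem decaysUniformlyOn_gluedDiff
    (hsol₁ : ClassicalDecayingSolution T κA κB κS αS θA₁ θB₁ θS₁)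
    (hsol₂ : ClassicalDecayingSolution T κA κB κS αS θA₂ θB₂ θS₂)
    (hA₁ : DecaysUniformlyOn T UA θA₁) (hA₂ : DecaysUniformlyOn T UA θA₂)
    (hB₁ : DecaysUniformlyOn T UB θB₁) (hB₂ : DecaysUniformlyOn T UB θB₂) :
    DecaysUniformlyOn T univ (gluedDiff θA₁ θB₁ θA₂ θB₂) := by
  have huniv : UA ∪ UB = univ := eq_univ_of_forall fun x => le_total 0 x.2
  rw [← huniv]
  exact ((hA₁.sub hA₂).congr fun x hx t _ => (gluedDiff_of_mem_UA hx t).symm).union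
    ((hB₁.sub hB₂).congr fun x hx t ht => (gluedDiff_of_mem_UB hsol₁ hsol₂ hx ht).symm)

variable {x₀ : ℝ³} {t₀ : ℝ}

theorem exists_hasDerivAt_gluedDiff_nonpos_of_pos (hκA : 0 ≤ κA)
    (hsol₁ : ClassicalDecayingSolution T κA κB κS αS θA₁ θB₁ θS₁)
    (hsol₂ : ClassicalDecayingSolution T κA κB κS αS θA₂ θB₂ θS₂)
    (hx₀ : 0 < x₀.2) (ht₀ : t₀ ∈ Ioo 0 T)
    (hmax : ∀ y, gluedDiff θA₁ θB₁ θA₂ θB₂ y t₀ ≤ gluedDiff θA₁ θB₁ θA₂ θB₂ x₀ t₀) :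
    ∃ d ≤ 0, HasDerivAt (gluedDiff θA₁ θB₁ θA₂ θB₂ x₀) d t₀ := by
  have hloc : IsLocalMax (fun y => θA₁ y t₀ - θA₂ y t₀) x₀ := by
    filter_upwards [UA_mem_nhds hx₀] with y hy
    rw [← gluedDiff_of_mem_UA hy, ← gluedDiff_of_mem_UA hx₀.le]
    exact hmax y
  refine ⟨_, heat_deriv_sub_nonpos_of_isLocalMax uniqueDiffOn_UA (UA_mem_nhds hx₀) hκA
    (hsol₁.spaceA t₀ ht₀) (hsol₂.spaceA t₀ ht₀) (hsol₁.pdeA x₀ hx₀ t₀ ht₀)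
    (hsol₂.pdeA x₀ hx₀ t₀ ht₀) hloc, ?_⟩
  rw [funext (gluedDiff_of_mem_UA (θB₁ := θB₁) (θB₂ := θB₂) hx₀.le)]
  exact (hsol₁.timeA x₀ hx₀.le t₀ ht₀).hasDerivAt.sub (hsol₂.timeA x₀ hx₀.le t₀ ht₀).hasDerivAt

theorem exists_hasDerivAt_gluedDiff_nonpos_of_neg (hκB : 0 ≤ κB)
    (hsol₁ : ClassicalDecayingSolution T κA κB κS αS θA₁ θB₁ θS₁)
    (hsol₂ : ClassicalDecayingSolution T κA κB κS αS θA₂ θB₂ θS₂)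
    (hx₀ : x₀.2 < 0) (ht₀ : t₀ ∈ Ioo 0 T)
    (hmax : ∀ y, gluedDiff θA₁ θB₁ θA₂ θB₂ y t₀ ≤ gluedDiff θA₁ θB₁ θA₂ θB₂ x₀ t₀) :
    ∃ d ≤ 0, HasDerivAt (gluedDiff θA₁ θB₁ θA₂ θB₂ x₀) d t₀ := by
  have hloc : IsLocalMax (fun y => θB₁ y t₀ - θB₂ y t₀) x₀ := by
    filter_upwards [UB_mem_nhds hx₀] with y hy
    rw [← gluedDiff_of_mem_UB hsol₁ hsol₂ hy ht₀, ← gluedDiff_of_neg hx₀]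
    exact hmax y
  refine ⟨_, heat_deriv_sub_nonpos_of_isLocalMax uniqueDiffOn_UB (UB_mem_nhds hx₀) hκB
    (hsol₁.spaceB t₀ ht₀) (hsol₂.spaceB t₀ ht₀) (hsol₁.pdeB x₀ hx₀ t₀ ht₀)
    (hsol₂.pdeB x₀ hx₀ t₀ ht₀) hloc, ?_⟩
  rw [funext (gluedDiff_of_neg (θA₁ := θA₁) (θA₂ := θA₂) hx₀)]
  exact (hsol₁.timeB x₀ hx₀.le t₀ ht₀).hasDerivAt.sub (hsol₂.timeB x₀ hx₀.le t₀ ht₀).hasDerivAt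

theorem exists_hasDerivAt_gluedDiff_nonpos_of_eq_zero (hκA : 0 ≤ κA) (hκB : 0 ≤ κB)
    (hκS : 0 ≤ κS) (hαS : 0 < αS)
    (hsol₁ : ClassicalDecayingSolution T κA κB κS αS θA₁ θB₁ θS₁)
    (hsol₂ : ClassicalDecayingSolution T κA κB κS αS θA₂ θB₂ θS₂)
    {xh : ℝ × ℝ} (ht₀ : t₀ ∈ Ioo 0 T)
    (hmax : ∀ y, gluedDiff θA₁ θB₁ θA₂ θB₂ y t₀ ≤ gluedDiff θA₁ θB₁ θA₂ θB₂ (xh, 0) t₀) :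
    ∃ d ≤ 0, HasDerivAt (gluedDiff θA₁ θB₁ θA₂ θB₂ (xh, 0)) d t₀ := by
  have hxA : ((xh, 0) : ℝ³) ∈ UA := le_refl (0 : ℝ)
  have hxB : ((xh, 0) : ℝ³) ∈ UB := le_refl (0 : ℝ)
  have hA : IsMaxOn (fun y => θA₁ y t₀ - θA₂ y t₀) UA (xh, 0) := fun y hy => by
    have := hmax y
    rwa [gluedDiff_of_mem_UA hy, gluedDiff_of_mem_UA hxA] at this
  have hB : IsMaxOn (fun y => θB₁ y t₀ - θB₂ y t₀) UB (xh, 0) := fun y hy => by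
    have := hmax y
    rwa [gluedDiff_of_mem_UB hsol₁ hsol₂ hy ht₀, gluedDiff_of_mem_UB hsol₁ hsol₂ hxB ht₀] at this
  have hS : IsLocalMax (fun y => θS₁ y t₀ - θS₂ y t₀) xh := Eventually.of_forall fun yh => by
    have := hmax (yh, 0)
    rwa [gluedDiff_of_mem_UA (le_refl (0 : ℝ)), gluedDiff_of_mem_UA hxA,
      hsol₁.interfaceA _ t₀ ht₀, hsol₂.interfaceA _ t₀ ht₀, hsol₁.interfaceA _ t₀ ht₀,
      hsol₂.interfaceA _ t₀ ht₀] at this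
  have hW : gluedDiff θA₁ θB₁ θA₂ θB₂ (xh, 0) =ᶠ[𝓝 t₀] fun s => θS₁ xh s - θS₂ xh s := by
    filter_upwards [Ioo_mem_nhds ht₀.1 ht₀.2] with s hs
    rw [gluedDiff_of_mem_UA hxA, hsol₁.interfaceA xh s hs, hsol₂.interfaceA xh s hs]
  refine ⟨_, interface_deriv_sub_nonpos hκA hκB hκS hαS hsol₁ hsol₂ ht₀ hA hB hS, ?_⟩
  exact ((hsol₁.timeS xh t₀ ht₀).hasDerivAt.sub
    (hsol₂.timeS xh t₀ ht₀).hasDerivAt).congr_of_eventuallyEq hW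

theorem exists_hasDerivAt_gluedDiff_nonpos (hκA : 0 ≤ κA) (hκB : 0 ≤ κB) (hκS : 0 ≤ κS)
    (hαS : 0 < αS) (hsol₁ : ClassicalDecayingSolution T κA κB κS αS θA₁ θB₁ θS₁)
    (hsol₂ : ClassicalDecayingSolution T κA κB κS αS θA₂ θB₂ θS₂) (ht₀ : t₀ ∈ Ioo 0 T)
    (hmax : ∀ y, gluedDiff θA₁ θB₁ θA₂ θB₂ y t₀ ≤ gluedDiff θA₁ θB₁ θA₂ θB₂ x₀ t₀) :
    ∃ d ≤ 0, HasDerivAt (gluedDiff θA₁ θB₁ θA₂ θB₂ x₀) d t₀ := by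
  obtain ⟨xh, x₃⟩ := x₀
  rcases lt_trichotomy x₃ 0 with hx | rfl | hx
  · exact exists_hasDerivAt_gluedDiff_nonpos_of_neg hκB hsol₁ hsol₂ hx ht₀ hmax
  · exact exists_hasDerivAt_gluedDiff_nonpos_of_eq_zero hκA hκB hκS hαS hsol₁ hsol₂ ht₀ hmax
  · exact exists_hasDerivAt_gluedDiff_nonpos_of_pos hκA hsol₁ hsol₂ hx ht₀ hmax

end TwoSolutions

theorem le_of_initial_eq {T κA κB κS αS : ℝ} (hκA : 0 ≤ κA) (hκB : 0 ≤ κB) (hκS : 0 ≤ κS)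
    (hαS : 0 < αS) {θA₁ θB₁ θA₂ θB₂ : ℝ³ → ℝ → ℝ} {θS₁ θS₂ : ℝ × ℝ → ℝ → ℝ}
    (hsol₁ : ClassicalDecayingSolution T κA κB κS αS θA₁ θB₁ θS₁)
    (hsol₂ : ClassicalDecayingSolution T κA κB κS αS θA₂ θB₂ θS₂)
    (hcA₁ : ContinuousOn (fun p : ℝ³ × ℝ => θA₁ p.1 p.2) (UA ×ˢ Ico 0 T))
    (hcB₁ : ContinuousOn (fun p : ℝ³ × ℝ => θB₁ p.1 p.2) (UB ×ˢ Ico 0 T))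
    (hcA₂ : ContinuousOn (fun p : ℝ³ × ℝ => θA₂ p.1 p.2) (UA ×ˢ Ico 0 T))
    (hcB₂ : ContinuousOn (fun p : ℝ³ × ℝ => θB₂ p.1 p.2) (UB ×ˢ Ico 0 T))
    (hA₁ : DecaysUniformlyOn T UA θA₁) (hA₂ : DecaysUniformlyOn T UA θA₂)
    (hB₁ : DecaysUniformlyOn T UB θB₁) (hB₂ : DecaysUniformlyOn T UB θB₂)
    (hinitA : ∀ x ∈ UA, θA₁ x 0 = θA₂ x 0) (hinitB : ∀ x ∈ UB, θB₁ x 0 = θB₂ x 0) :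
    (∀ x ∈ UA, ∀ t ∈ Ico 0 T, θA₁ x t ≤ θA₂ x t) ∧
      (∀ x ∈ UB, ∀ t ∈ Ico 0 T, θB₁ x t ≤ θB₂ x t) := by
  have hW : ∀ x, ∀ t ∈ Ico 0 T, gluedDiff θA₁ θB₁ θA₂ θB₂ x t ≤ 0 := fun x t ht =>
    nonpos_of_deriv_nonpos_at_spatial_max
      (continuousOn_gluedDiff hsol₁ hsol₂ hcA₁ hcB₁ hcA₂ hcB₂ hinitA hinitB)
      (fun x => (gluedDiff_zero hinitA hinitB x).le)
      (decaysUniformlyOn_gluedDiff hsol₁ hsol₂ hA₁ hA₂ hB₁ hB₂)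
      (fun _ _ ht₀ hmax => exists_hasDerivAt_gluedDiff_nonpos hκA hκB hκS hαS hsol₁ hsol₂ ht₀ hmax)
      ht
  refine ⟨fun x hx t ht => ?_, fun x hx t ht => ?_⟩
  · have := hW x t ht
    rw [gluedDiff_of_mem_UA hx] at this
    linarith
  · rcases ht.1.eq_or_lt with rfl | ht0
    · exact (hinitB x hx).le
    · have := hW x t ht
      rw [gluedDiff_of_mem_UB hsol₁ hsol₂ hx ⟨ht0, ht.2⟩] at this
      linarith

theorem uniqueness_threephase_general (T κA κB κS αS : ℝ)
    (hκA : 0 < κA) (hκB : 0 < κB) (hκS : 0 < κS) (hαS : 0 < αS)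
    (θA₁ θB₁ θA₂ θB₂ : (ℝ × ℝ) × ℝ → ℝ → ℝ) (θS₁ θS₂ : ℝ × ℝ → ℝ → ℝ)
    (hsol₁ : ClassicalDecayingSolution T κA κB κS αS θA₁ θB₁ θS₁)
    (hsol₂ : ClassicalDecayingSolution T κA κB κS αS θA₂ θB₂ θS₂)
    -- continuity up to time t = 0
    (hcA₁ : ContinuousOn (fun p : ((ℝ × ℝ) × ℝ) × ℝ => θA₁ p.1 p.2) (UA ×ˢ Set.Ico 0 T))
    (hcB₁ : ContinuousOn (fun p : ((ℝ × ℝ) × ℝ) × ℝ => θB₁ p.1 p.2) (UB ×ˢ Set.Ico 0 T))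
    (hcA₂ : ContinuousOn (fun p : ((ℝ × ℝ) × ℝ) × ℝ => θA₂ p.1 p.2) (UA ×ˢ Set.Ico 0 T))
    (hcB₂ : ContinuousOn (fun p : ((ℝ × ℝ) × ℝ) × ℝ => θB₂ p.1 p.2) (UB ×ˢ Set.Ico 0 T))
    -- decay bounds with a function M continuous on [0,T)
    (hdecay : ∃ M : ℝ → ℝ, ContinuousOn M (Set.Ico 0 T) ∧
      (∀ i : Fin 2, ∀ x ∈ UA, ∀ t ∈ Set.Ioo (0 : ℝ) T,
        |(if i = 0 then θA₁ else θA₂) x t| + |deriv ((if i = 0 then θA₁ else θA₂) x) t|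
          + ‖fderivWithin ℝ (fun y => (if i = 0 then θA₁ else θA₂) y t) UA x‖
          + ‖fderivWithin ℝ
              (fderivWithin ℝ (fun y => (if i = 0 then θA₁ else θA₂) y t) UA) UA x‖
          ≤ M t / (1 + ‖x‖) ^ 4) ∧
      (∀ i : Fin 2, ∀ x ∈ UB, ∀ t ∈ Set.Ioo (0 : ℝ) T,
        |(if i = 0 then θB₁ else θB₂) x t| + |deriv ((if i = 0 then θB₁ else θB₂) x) t|
          + ‖fderivWithin ℝ (fun y => (if i = 0 then θB₁ else θB₂) y t) UB x‖
          + ‖fderivWithin ℝ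
              (fderivWithin ℝ (fun y => (if i = 0 then θB₁ else θB₂) y t) UB) UB x‖
          ≤ M t / (1 + ‖x‖) ^ 4) ∧
      (∀ i : Fin 2, ∀ xh : ℝ × ℝ, ∀ t ∈ Set.Ioo (0 : ℝ) T,
        |(if i = 0 then θS₁ else θS₂) xh t| + |deriv ((if i = 0 then θS₁ else θS₂) xh) t|
          + ‖fderiv ℝ (fun y => (if i = 0 then θS₁ else θS₂) y t) xh‖
          + ‖fderiv ℝ (fderiv ℝ (fun y => (if i = 0 then θS₁ else θS₂) y t)) xh‖
          ≤ M t / (1 + ‖xh‖) ^ 4))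
    -- agreement at t = 0
    (hinitA : ∀ x ∈ UA, θA₁ x 0 = θA₂ x 0)
    (hinitB : ∀ x ∈ UB, θB₁ x 0 = θB₂ x 0)
    (hinitS : ∀ xh : ℝ × ℝ, θS₁ xh 0 = θS₂ xh 0) :
    (∀ x ∈ UA, ∀ t ∈ Set.Ico (0 : ℝ) T, θA₁ x t = θA₂ x t) ∧
    (∀ x ∈ UB, ∀ t ∈ Set.Ico (0 : ℝ) T, θB₁ x t = θB₂ x t) ∧
    (∀ xh : ℝ × ℝ, ∀ t ∈ Set.Ico (0 : ℝ) T, θS₁ xh t = θS₂ xh t) := by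
  obtain ⟨M, hM, hA, hB, -⟩ := hdecay
  have le_of_sum_le : ∀ {a b c d B : ℝ}, 0 ≤ b → 0 ≤ c → 0 ≤ d → a + b + c + d ≤ B → a ≤ B := by
    intros
    linarith
  have hdA : ∀ i : Fin 2, DecaysUniformlyOn T UA (if i = 0 then θA₁ else θA₂) := fun i =>
    decaysUniformlyOn_of_abs_le hM four_ne_zero fun x hx t ht =>
      le_of_sum_le (by positivity) (by positivity) (by positivity) (hA i x hx t ht)
  have hdB : ∀ i : Fin 2, DecaysUniformlyOn T UB (if i = 0 then θB₁ else θB₂) := fun i =>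
    decaysUniformlyOn_of_abs_le hM four_ne_zero fun x hx t ht =>
      le_of_sum_le (by positivity) (by positivity) (by positivity) (hB i x hx t ht)
  obtain ⟨hA₁, hA₂, hB₁, hB₂⟩ : DecaysUniformlyOn T UA θA₁ ∧ DecaysUniformlyOn T UA θA₂ ∧
      DecaysUniformlyOn T UB θB₁ ∧ DecaysUniformlyOn T UB θB₂ := by
    simpa using And.intro (hdA 0) (And.intro (hdA 1) (And.intro (hdB 0) (hdB 1)))
  obtain ⟨leA, leB⟩ := le_of_initial_eq hκA.le hκB.le hκS.le hαS hsol₁ hsol₂ hcA₁ hcB₁ hcA₂ hcB₂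
    hA₁ hA₂ hB₁ hB₂ hinitA hinitB
  obtain ⟨geA, geB⟩ := le_of_initial_eq hκA.le hκB.le hκS.le hαS hsol₂ hsol₁ hcA₂ hcB₂ hcA₁ hcB₁
    hA₂ hA₁ hB₂ hB₁ (fun x hx => (hinitA x hx).symm) (fun x hx => (hinitB x hx).symm)
  refine ⟨fun x hx t ht => (leA x hx t ht).antisymm (geA x hx t ht),
    fun x hx t ht => (leB x hx t ht).antisymm (geB x hx t ht), fun xh t ht => ?_⟩
  rcases ht.1.eq_or_lt with rfl | ht0
  · exact hinitS xh
  · rw [← hsol₁.interfaceA xh t ⟨ht0, ht.2⟩, ← hsol₂.interfaceA xh t ⟨ht0, ht.2⟩]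
    exact (leA _ (le_refl (0 : ℝ)) t ht).antisymm (geA _ (le_refl (0 : ℝ)) t ht)

/-- Lemma 5.1: uniqueness of classical decaying solutions.
If two classical decaying solutions of the three-phase heat system are continuous up to
`t = 0`, satisfy the decay bounds with a function `M` continuous on `[0,T)`, and agree at
`t = 0`, then they coincide on `[0,T)`. -/
theorem uniqueness_threephase (T κA κB κS αS : ℝ) (hT : 0 < T)
    (hκA : 0 < κA) (hκB : 0 < κB) (hκS : 0 < κS) (hαS : 0 < αS)
    (θA₁ θB₁ θA₂ θB₂ : (ℝ × ℝ) × ℝ → ℝ → ℝ) (θS₁ θS₂ : ℝ × ℝ → ℝ → ℝ)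
    (hsol₁ : ClassicalDecayingSolution T κA κB κS αS θA₁ θB₁ θS₁)
    (hsol₂ : ClassicalDecayingSolution T κA κB κS αS θA₂ θB₂ θS₂)
    -- continuity up to time t = 0
    (hcA₁ : ContinuousOn (fun p : ((ℝ × ℝ) × ℝ) × ℝ => θA₁ p.1 p.2) (UA ×ˢ Set.Ico 0 T))
    (hcB₁ : ContinuousOn (fun p : ((ℝ × ℝ) × ℝ) × ℝ => θB₁ p.1 p.2) (UB ×ˢ Set.Ico 0 T))
    (hcS₁ : ContinuousOn (fun p : (ℝ × ℝ) × ℝ => θS₁ p.1 p.2) (Set.univ ×ˢ Set.Ico 0 T))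
    (hcA₂ : ContinuousOn (fun p : ((ℝ × ℝ) × ℝ) × ℝ => θA₂ p.1 p.2) (UA ×ˢ Set.Ico 0 T))
    (hcB₂ : ContinuousOn (fun p : ((ℝ × ℝ) × ℝ) × ℝ => θB₂ p.1 p.2) (UB ×ˢ Set.Ico 0 T))
    (hcS₂ : ContinuousOn (fun p : (ℝ × ℝ) × ℝ => θS₂ p.1 p.2) (Set.univ ×ˢ Set.Ico 0 T))
    -- decay bounds with a function M continuous on [0,T)
    (hdecay : ∃ M : ℝ → ℝ, ContinuousOn M (Set.Ico 0 T) ∧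
      (∀ i : Fin 2, ∀ x ∈ UA, ∀ t ∈ Set.Ioo (0 : ℝ) T,
        |(if i = 0 then θA₁ else θA₂) x t| + |deriv ((if i = 0 then θA₁ else θA₂) x) t|
          + ‖fderivWithin ℝ (fun y => (if i = 0 then θA₁ else θA₂) y t) UA x‖
          + ‖fderivWithin ℝ
              (fderivWithin ℝ (fun y => (if i = 0 then θA₁ else θA₂) y t) UA) UA x‖
          ≤ M t / (1 + ‖x‖) ^ 4) ∧
      (∀ i : Fin 2, ∀ x ∈ UB, ∀ t ∈ Set.Ioo (0 : ℝ) T,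
        |(if i = 0 then θB₁ else θB₂) x t| + |deriv ((if i = 0 then θB₁ else θB₂) x) t|
          + ‖fderivWithin ℝ (fun y => (if i = 0 then θB₁ else θB₂) y t) UB x‖
          + ‖fderivWithin ℝ
              (fderivWithin ℝ (fun y => (if i = 0 then θB₁ else θB₂) y t) UB) UB x‖
          ≤ M t / (1 + ‖x‖) ^ 4) ∧
      (∀ i : Fin 2, ∀ xh : ℝ × ℝ, ∀ t ∈ Set.Ioo (0 : ℝ) T,
        |(if i = 0 then θS₁ else θS₂) xh t| + |deriv ((if i = 0 then θS₁ else θS₂) xh) t|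
          + ‖fderiv ℝ (fun y => (if i = 0 then θS₁ else θS₂) y t) xh‖
          + ‖fderiv ℝ (fderiv ℝ (fun y => (if i = 0 then θS₁ else θS₂) y t)) xh‖
          ≤ M t / (1 + ‖xh‖) ^ 4))
    -- agreement at t = 0
    (hinitA : ∀ x ∈ UA, θA₁ x 0 = θA₂ x 0)
    (hinitB : ∀ x ∈ UB, θB₁ x 0 = θB₂ x 0)
    (hinitS : ∀ xh : ℝ × ℝ, θS₁ xh 0 = θS₂ xh 0) :
    (∀ x ∈ UA, ∀ t ∈ Set.Ico (0 : ℝ) T, θA₁ x t = θA₂ x t) ∧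
    (∀ x ∈ UB, ∀ t ∈ Set.Ico (0 : ℝ) T, θB₁ x t = θB₂ x t) ∧
    (∀ xh : ℝ × ℝ, ∀ t ∈ Set.Ico (0 : ℝ) T, θS₁ xh t = θS₂ xh t) :=
  uniqueness_threephase_general T κA κB κS αS hκA hκB hκS hαS θA₁ θB₁ θA₂ θB₂ θS₁ θS₂ hsol₁ hsol₂
    hcA₁ hcB₁ hcA₂ hcB₂ hdecay hinitA hinitB hinitS

end
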